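/- arXiv:2311.12743 — 2 statements merged into one kernel-verified Lean document; each statement's English description precedes it below -/
import Mathlib

section
/- Let φ ∈ D(T₀) = D(T). If T₀φ = φ, then the function φ₀ := φ − φ(0) satisfies Tφ₀ = φ₀. Conversely, if Tφ = φ, then T₀φ = φ (i.e., the normalizing constant k := T₂Ψ(0)·exp(−φ(0)/ĉ), where Ψ := ĉ·log T₁φ, necessarily equals 1). In particular, T₀ admits a fixed point if and only if T admits a fixed point, and every fixed point of T is a fixed point of T₀. -/
open MeasureTheory Real Set Filter

noncomputable section

/-- Density of the centered normal distribution with variance `σ²`. -/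
def pdens (σ y : ℝ) : ℝ :=
  (Real.sqrt (2 * Real.pi * σ ^ 2))⁻¹ * Real.exp (-(y ^ 2) / (2 * σ ^ 2))

/-- The operator `T₁`: `T₁φ(v) = ∫ exp((yv − φ(y))/ĉ) p_σ(y) dy` with `ĉ = cσ²`. -/
def T1 (c σ : ℝ) (φ : ℝ → ℝ) (v : ℝ) : ℝ :=
  ∫ y : ℝ, Real.exp ((y * v - φ y) / (c * σ ^ 2)) * pdens σ y

/-- The operator `T₂`: `T₂Ψ(y) = ∫ exp((yv − Ψ(v))/ĉ) Pr(dv)`. -/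
def T2 (c σ : ℝ) (Pr : Measure ℝ) (Ψ : ℝ → ℝ) (y : ℝ) : ℝ :=
  ∫ v : ℝ, Real.exp ((y * v - Ψ v) / (c * σ ^ 2)) ∂Pr

/-- `Ψ = ĉ · log T₁φ`. -/
def Ψof (c σ : ℝ) (φ : ℝ → ℝ) (v : ℝ) : ℝ := c * σ ^ 2 * Real.log (T1 c σ φ v)

/-- The unnormalised operator `T₀φ = ĉ · log T₂(ĉ log T₁ φ)`. -/
def T0op (c σ : ℝ) (Pr : Measure ℝ) (φ : ℝ → ℝ) (y : ℝ) : ℝ :=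
  c * σ ^ 2 * Real.log (T2 c σ Pr (Ψof c σ φ) y)

/-- The normalised operator `Tφ = ĉ · log ( T₂(ĉ log T₁ φ) / T₂(ĉ log T₁ φ)(0) )`. -/
def Tnorm (c σ : ℝ) (Pr : Measure ℝ) (φ : ℝ → ℝ) (y : ℝ) : ℝ :=
  c * σ ^ 2 * Real.log (T2 c σ Pr (Ψof c σ φ) y / T2 c σ Pr (Ψof c σ φ) 0)

/-- Topological support of a measure on `ℝ`. -/
def msupport (Pr : Measure ℝ) : Set ℝ := {v | ∀ U : Set ℝ, IsOpen U → v ∈ U → 0 < Pr U}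

/-- Membership in the common domain `D(T) = D(T₀)`: `T₁φ ∈ (0,∞)` on the support of `Pr`
(finiteness being integrability of the positive integrand) and
`T₂(ĉ log T₁φ) ∈ (0,∞)` everywhere. -/
def memD (c σ : ℝ) (Pr : Measure ℝ) (φ : ℝ → ℝ) : Prop :=
  Measurable φ ∧
  (∀ v ∈ msupport Pr,
    Integrable (fun y : ℝ => Real.exp ((y * v - φ y) / (c * σ ^ 2)) * pdens σ y) ∧
      0 < T1 c σ φ v) ∧
  (∀ y : ℝ,
    Integrable (fun v : ℝ => Real.exp ((y * v - Ψof c σ φ v) / (c * σ ^ 2))) Pr ∧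
      0 < T2 c σ Pr (Ψof c σ φ) y)

/-!
Replacing `φ` by `φ - a` multiplies `T₁φ` by `exp (a/ĉ)`, hence adds `a` to `Ψ = ĉ log T₁φ` on
the support of `Pr` (a set of full measure) and multiplies `T₂Ψ` by `exp (-a/ĉ)`; so `T` is
invariant under such shifts and `Tφ = T₀φ - T₀φ(0)`, which gives the first claim.
For the converse, Tonelli applied to `exp ((yv - φ(y) - Ψ(v))/ĉ) p_σ(y)` gives
`∫ exp (-φ/ĉ) T₂Ψ p_σ = 1`, since integrating in `y` first leaves `exp (-Ψ(v)/ĉ) T₁φ(v) = 1`.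
If `Tφ = φ` then `T₂Ψ = k exp (φ/ĉ)` with `k = T₂Ψ(0)`, so this integral is `k`, and `k = 1`.
-/

lemma msupport_eq_support (Pr : Measure ℝ) : msupport Pr = Pr.support := by
  rw [Measure.support_eq_forall_isOpen]
  ext v
  exact forall_congr' fun U => imp.swap

lemma ae_mem_msupport (Pr : Measure ℝ) : ∀ᵐ v ∂Pr, v ∈ msupport Pr := by
  rw [msupport_eq_support]
  exact Measure.support_mem_ae

lemma pdens_eq_gaussianPDFReal (σ : ℝ) :
    pdens σ = ProbabilityTheory.gaussianPDFReal 0 ⟨σ ^ 2, sq_nonneg σ⟩ := by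
  ext y
  simp only [pdens, ProbabilityTheory.gaussianPDFReal, sub_zero]
  rfl

lemma lintegral_pdens {σ : ℝ} (hσ : σ ≠ 0) : ∫⁻ y, ENNReal.ofReal (pdens σ y) = 1 := by
  rw [pdens_eq_gaussianPDFReal]
  refine ProbabilityTheory.lintegral_gaussianPDFReal_eq_one 0 fun h => hσ ?_
  exact pow_eq_zero_iff two_ne_zero |>.1 (congrArg NNReal.toReal h)

lemma pdens_nonneg (σ y : ℝ) : 0 ≤ pdens σ y := by
  rw [pdens_eq_gaussianPDFReal]
  exact ProbabilityTheory.gaussianPDFReal_nonneg _ _ _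

lemma measurable_pdens (σ : ℝ) : Measurable (pdens σ) := by
  rw [pdens_eq_gaussianPDFReal]
  exact ProbabilityTheory.measurable_gaussianPDFReal _ _

lemma ofReal_mul_integral_eq_lintegral {α : Type*} [MeasurableSpace α] {μ : Measure α}
    {f : α → ℝ} (hf : Integrable f μ) (hf0 : 0 ≤ᵐ[μ] f) {A : ℝ} (hA : 0 ≤ A) :
    ENNReal.ofReal (A * ∫ x, f x ∂μ) = ∫⁻ x, ENNReal.ofReal (A * f x) ∂μ := by
  rw [← integral_const_mul]
  refine ofReal_integral_eq_lintegral_ofReal (hf.const_mul A) ?_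
  filter_upwards [hf0] with x hx using mul_nonneg hA hx

variable {c σ : ℝ} {Pr : Measure ℝ} {φ : ℝ → ℝ}

lemma measurable_T1 (hφ : Measurable φ) : Measurable (T1 c σ φ) := by
  have h : StronglyMeasurable fun p : ℝ × ℝ =>
      exp ((p.2 * p.1 - φ p.2) / (c * σ ^ 2)) * pdens σ p.2 := by
    apply Measurable.stronglyMeasurable
    have := measurable_pdens σ
    fun_prop
  exact h.integral_prod_right'.measurable

lemma measurable_Ψof (hφ : Measurable φ) : Measurable (Ψof c σ φ) :=
  (measurable_log.comp (measurable_T1 hφ)).const_mul _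

lemma T1_integrand_sub_const (a v : ℝ) :
    (fun y => exp ((y * v - (φ y - a)) / (c * σ ^ 2)) * pdens σ y) =
      fun y => exp (a / (c * σ ^ 2)) * (exp ((y * v - φ y) / (c * σ ^ 2)) * pdens σ y) := by
  ext y
  rw [← mul_assoc, ← exp_add]
  ring_nf

lemma T1_sub_const (a v : ℝ) :
    T1 c σ (fun y => φ y - a) v = exp (a / (c * σ ^ 2)) * T1 c σ φ v := by
  rw [T1, T1, T1_integrand_sub_const, integral_const_mul]

lemma Ψof_sub_const (hĉ : c * σ ^ 2 ≠ 0) {v : ℝ} (hT1 : 0 < T1 c σ φ v) (a : ℝ) :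
    Ψof c σ (fun y => φ y - a) v = a + Ψof c σ φ v := by
  rw [Ψof, Ψof, T1_sub_const, log_mul (exp_ne_zero _) hT1.ne', log_exp, mul_add,
    mul_div_cancel₀ _ hĉ]

lemma T2_integrand_sub_const (hĉ : c * σ ^ 2 ≠ 0) (hD : memD c σ Pr φ) (a y : ℝ) :
    (fun v => exp ((y * v - Ψof c σ (fun y => φ y - a) v) / (c * σ ^ 2))) =ᵐ[Pr]
      fun v => exp (-a / (c * σ ^ 2)) * exp ((y * v - Ψof c σ φ v) / (c * σ ^ 2)) := by
  filter_upwards [ae_mem_msupport Pr] with v hv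
  rw [Ψof_sub_const hĉ (hD.2.1 v hv).2, ← exp_add]
  ring_nf

lemma T2_Ψof_sub_const (hĉ : c * σ ^ 2 ≠ 0) (hD : memD c σ Pr φ) (a y : ℝ) :
    T2 c σ Pr (Ψof c σ (fun y => φ y - a)) y =
      exp (-a / (c * σ ^ 2)) * T2 c σ Pr (Ψof c σ φ) y := by
  rw [T2, T2, integral_congr_ae (T2_integrand_sub_const hĉ hD a y), integral_const_mul]

lemma memD_sub_const (hĉ : c * σ ^ 2 ≠ 0) (hD : memD c σ Pr φ) (a : ℝ) :
    memD c σ Pr (fun y => φ y - a) := by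
  obtain ⟨hφ, hT1, hT2⟩ := hD
  refine ⟨hφ.sub_const a, fun v hv => ⟨?_, ?_⟩, fun y => ⟨?_, ?_⟩⟩
  · rw [T1_integrand_sub_const]
    exact (hT1 v hv).1.const_mul _
  · rw [T1_sub_const]
    exact mul_pos (exp_pos _) (hT1 v hv).2
  · exact ((hT2 y).1.const_mul _).congr (T2_integrand_sub_const hĉ ⟨hφ, hT1, hT2⟩ a y).symm
  · rw [T2_Ψof_sub_const hĉ ⟨hφ, hT1, hT2⟩]
    exact mul_pos (exp_pos _) (hT2 y).2

lemma Tnorm_sub_const (hĉ : c * σ ^ 2 ≠ 0) (hD : memD c σ Pr φ) (a : ℝ) :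
    Tnorm c σ Pr (fun y => φ y - a) = Tnorm c σ Pr φ := by
  ext y
  rw [Tnorm, Tnorm, T2_Ψof_sub_const hĉ hD, T2_Ψof_sub_const hĉ hD,
    mul_div_mul_left _ _ (exp_ne_zero _)]

lemma Tnorm_eq_T0op_sub (hD : memD c σ Pr φ) (y : ℝ) :
    Tnorm c σ Pr φ y = T0op c σ Pr φ y - T0op c σ Pr φ 0 := by
  rw [Tnorm, T0op, T0op, log_div (hD.2.2 y).2.ne' (hD.2.2 0).2.ne', mul_sub]

theorem Tnorm_sub_apply_zero_of_T0op_eq (hĉ : c * σ ^ 2 ≠ 0) (hD : memD c σ Pr φ)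
    (hfix : T0op c σ Pr φ = φ) :
    Tnorm c σ Pr (fun y => φ y - φ 0) = fun y => φ y - φ 0 := by
  ext y
  rw [Tnorm_sub_const hĉ hD, Tnorm_eq_T0op_sub hD, hfix]

lemma lintegral_exp_neg_div_mul_pdens_mul_T2 [IsProbabilityMeasure Pr]
    (hĉ : c * σ ^ 2 ≠ 0) (hD : memD c σ Pr φ) :
    ∫⁻ y, ENNReal.ofReal
      (exp (-φ y / (c * σ ^ 2)) * pdens σ y * T2 c σ Pr (Ψof c σ φ) y) = 1 := by
  obtain ⟨hφ, hT1, hT2⟩ := hD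
  set F : ℝ → ℝ → ℝ := fun y v =>
    exp ((y * v - φ y - Ψof c σ φ v) / (c * σ ^ 2)) * pdens σ y
  have hF : Measurable (Function.uncurry fun y v => ENNReal.ofReal (F y v)) := by
    have := measurable_pdens σ
    have := measurable_Ψof (c := c) (σ := σ) hφ
    fun_prop
  have h_inner_Pr : ∀ y, ∫⁻ v, ENNReal.ofReal (F y v) ∂Pr = ENNReal.ofReal
      (exp (-φ y / (c * σ ^ 2)) * pdens σ y * T2 c σ Pr (Ψof c σ φ) y) := by
    intro y
    rw [T2, ofReal_mul_integral_eq_lintegral (hT2 y).1 (ae_of_all _ fun v => (exp_pos _).le)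
      (mul_nonneg (exp_pos _).le (pdens_nonneg σ y))]
    congr with v
    rw [mul_right_comm, ← exp_add]
    simp only [F]
    ring_nf
  have h_inner_volume : ∀ᵐ v ∂Pr, ∫⁻ y, ENNReal.ofReal (F y v) = 1 := by
    filter_upwards [ae_mem_msupport Pr] with v hv
    have hnonneg : 0 ≤ᵐ[volume] fun y => exp ((y * v - φ y) / (c * σ ^ 2)) * pdens σ y :=
      ae_of_all _ fun y => mul_nonneg (exp_pos _).le (pdens_nonneg σ y)
    have hΨ : exp (-Ψof c σ φ v / (c * σ ^ 2)) * T1 c σ φ v = 1 := by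
      rw [Ψof, neg_div, mul_div_cancel_left₀ _ hĉ, exp_neg, exp_log (hT1 v hv).2,
        inv_mul_cancel₀ (hT1 v hv).2.ne']
    rw [← ENNReal.ofReal_one, ← hΨ, T1,
      ofReal_mul_integral_eq_lintegral (hT1 v hv).1 hnonneg (exp_pos _).le]
    congr with y
    rw [← mul_assoc, ← exp_add]
    simp only [F]
    ring_nf
  simp_rw [← h_inner_Pr]
  rw [lintegral_lintegral_swap hF.aemeasurable, lintegral_congr_ae h_inner_volume,
    lintegral_one, measure_univ]

theorem T0op_eq_of_Tnorm_eq [IsProbabilityMeasure Pr] (hĉ : c * σ ^ 2 ≠ 0) (hσ : σ ≠ 0)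
    (hD : memD c σ Pr φ) (hfix : Tnorm c σ Pr φ = φ) : T0op c σ Pr φ = φ := by
  set k := T0op c σ Pr φ 0
  have hT0 : ∀ y, T0op c σ Pr φ y = φ y + k := fun y => by
    linarith [Tnorm_eq_T0op_sub hD y, congrFun hfix y]
  have hintegrand : ∀ y, exp (-φ y / (c * σ ^ 2)) * pdens σ y * T2 c σ Pr (Ψof c σ φ) y =
      exp (k / (c * σ ^ 2)) * pdens σ y := fun y => by
    rw [← exp_log (hD.2.2 y).2, ← mul_div_cancel_left₀ (log _) hĉ, ← T0op, hT0,
      mul_right_comm, ← exp_add]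
    ring_nf
  have hk : exp (k / (c * σ ^ 2)) = 1 := by
    have h := lintegral_exp_neg_div_mul_pdens_mul_T2 hĉ hD
    simp_rw [hintegrand, ENNReal.ofReal_mul (exp_pos _).le] at h
    rwa [lintegral_const_mul' _ _ ENNReal.ofReal_ne_top, lintegral_pdens hσ, mul_one,
      ENNReal.ofReal_eq_one] at h
  have hk0 : k = 0 := by
    simpa [hĉ] using hk
  ext y
  rw [hT0, hk0, add_zero]

/-- if `T₀φ = φ` then `φ₀ := φ − φ(0)` satisfies `Tφ₀ = φ₀`; if `Tφ = φ` then
`T₀φ = φ`; in particular `T₀` has a fixed point iff `T` has one, and every fixed point of `T`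
is a fixed point of `T₀`. -/
theorem stmt0 (c σ : ℝ) (hc : 0 < c) (hσ : 0 < σ)
    (Pr : Measure ℝ) [IsProbabilityMeasure Pr] :
    (∀ φ : ℝ → ℝ, memD c σ Pr φ → T0op c σ Pr φ = φ →
      Tnorm c σ Pr (fun y => φ y - φ 0) = fun y => φ y - φ 0) ∧
    (∀ φ : ℝ → ℝ, memD c σ Pr φ → Tnorm c σ Pr φ = φ → T0op c σ Pr φ = φ) ∧
    ((∃ φ : ℝ → ℝ, memD c σ Pr φ ∧ T0op c σ Pr φ = φ) ↔
      (∃ φ : ℝ → ℝ, memD c σ Pr φ ∧ Tnorm c σ Pr φ = φ)) := by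
  have hĉ : c * σ ^ 2 ≠ 0 := by positivity
  refine ⟨fun φ hD => Tnorm_sub_apply_zero_of_T0op_eq hĉ hD,
    fun φ hD => T0op_eq_of_Tnorm_eq hĉ hσ.ne' hD, ⟨?_, ?_⟩⟩
  · rintro ⟨φ, hD, hfix⟩
    exact ⟨_, memD_sub_const hĉ hD (φ 0), Tnorm_sub_apply_zero_of_T0op_eq hĉ hD hfix⟩
  · rintro ⟨φ, hD, hfix⟩
    exact ⟨φ, hD, T0op_eq_of_Tnorm_eq hĉ hσ.ne' hD hfix⟩

end
end

section
/- Suppose Π is the Gaussian distribution N(μ, γ²) with γ > 0. Let λ* := ( −c + √( c² + 4γ²/σ² ) ) / 2, which is the unique positive root of σ²λ² + ĉλ − γ² = 0, and set φ*(y) := λ* y²/2 + μ y. Then T₀φ* = φ*, and Ψ*(v) := ĉ·log T₁φ*(v) = (ĉ/2)·log( c/(c+λ*) ) + (μ−v)²/(2(c+λ*)) for all v ∈ ℝ. -/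
/-!
`T₁` and `T₂` integrate the exponential of a quadratic against a Gaussian density, so both are
Gaussian integrals evaluated by completing the square. For `φ*(y) = λ y²/2 + μ y` the first one
gives `ĉ log T₁φ* = Ψ*`, a quadratic of curvature `1/(c+λ)`; integrating `exp((yv − Ψ*(v))/ĉ)`
against `N(μ, γ²)` then returns curvature exactly `λ`, because `γ² = λσ²(c+λ)` is the quadratic
equation defining `λ*`.
-/

open MeasureTheory Real Set Filter

noncomputable section

open ProbabilityTheory
open scoped NNReal

lemma quadratic_pos_root {b d r : ℝ} (hd : 0 < d) (hr : r = (-b + √(b ^ 2 + 4 * d)) / 2) :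
    0 < r ∧ r ^ 2 + b * r - d = 0 ∧ ∀ l : ℝ, 0 < l → l ^ 2 + b * l - d = 0 → l = r := by
  have hsq : √(b ^ 2 + 4 * d) ^ 2 = b ^ 2 + 4 * d := sq_sqrt (by positivity)
  have hroot : r ^ 2 + b * r - d = 0 := by
    rw [hr]
    linear_combination hsq / 4
  have hpos : 0 < r := by
    have : b < √(b ^ 2 + 4 * d) := by nlinarith [sqrt_nonneg (b ^ 2 + 4 * d)]
    rw [hr]
    linarith
  refine ⟨hpos, hroot, fun l hl hlroot => ?_⟩
  -- two distinct roots of `X² + bX − d` have product `−d < 0`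
  have : (l - r) * (l + r + b) = 0 := by linear_combination hlroot - hroot
  rcases mul_eq_zero.1 this with h | h
  · linarith
  · nlinarith [mul_pos hl hpos]

lemma sqrt_eq_exp_log_div_two {x : ℝ} (hx : 0 < x) : √x = exp (log x / 2) := by
  rw [Real.sqrt_eq_rpow, rpow_def_of_pos hx]
  congr 1
  ring

lemma inv_sqrt_mul_exp {x : ℝ} (hx : 0 < x) (t : ℝ) : (√x)⁻¹ * exp t = exp (t - log x / 2) := by
  rw [sqrt_eq_exp_log_div_two hx, ← exp_neg, ← exp_add, neg_add_eq_sub]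

lemma integral_exp_quadratic {a : ℝ} (ha : 0 < a) (b k : ℝ) :
    ∫ x : ℝ, exp (-a * x ^ 2 + b * x + k) = exp (b ^ 2 / (4 * a) + k + log (π / a) / 2) := by
  have complete_square : ∀ x : ℝ, exp (-a * x ^ 2 + b * x + k)
      = exp (b ^ 2 / (4 * a) + k) * exp (-a * (x - b / (2 * a)) ^ 2) := fun x => by
    rw [← exp_add]
    congr 1
    field_simp
    ring
  simp_rw [complete_square]
  rw [integral_const_mul, integral_sub_right_eq_self (fun x => exp (-a * x ^ 2)),
    integral_gaussian, sqrt_eq_exp_log_div_two (by positivity), exp_add _ (log _ / 2)]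

section QuadraticPotential

variable {c σ lam : ℝ} (μ : ℝ)

lemma T1_quadratic (hc : 0 < c) (hσ : σ ≠ 0) (hcl : 0 < c + lam) (v : ℝ) :
    T1 c σ (fun y => lam * y ^ 2 / 2 + μ * y) v =
      exp (((c * σ ^ 2) / 2 * log (c / (c + lam)) + (μ - v) ^ 2 / (2 * (c + lam))) /
        (c * σ ^ 2)) := by
  have hσ2 : 0 < σ ^ 2 := by positivity
  have ha : 0 < (c + lam) / (2 * (c * σ ^ 2)) := by positivity
  have integrand : ∀ y : ℝ, exp ((y * v - (lam * y ^ 2 / 2 + μ * y)) / (c * σ ^ 2)) * pdens σ y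
      = exp (-((c + lam) / (2 * (c * σ ^ 2))) * y ^ 2 + (v - μ) / (c * σ ^ 2) * y
          - log (2 * π * σ ^ 2) / 2) := fun y => by
    rw [pdens, mul_left_comm, ← exp_add, inv_sqrt_mul_exp (by positivity)]
    congr 1
    field_simp
    ring
  have hlog : log (π / ((c + lam) / (2 * (c * σ ^ 2))))
      = log (2 * π * σ ^ 2) + log (c / (c + lam)) := by
    rw [← log_mul (by positivity) (by positivity)]
    congr 1
    field_simp
  simp_rw [T1, integrand, sub_eq_add_neg _ (log _ / 2)]
  rw [integral_exp_quadratic ha, hlog]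
  congr 1
  field_simp
  ring

lemma Ψof_quadratic (hc : 0 < c) (hσ : σ ≠ 0) (hcl : 0 < c + lam) (v : ℝ) :
    Ψof c σ (fun y => lam * y ^ 2 / 2 + μ * y) v =
      (c * σ ^ 2) / 2 * log (c / (c + lam)) + (μ - v) ^ 2 / (2 * (c + lam)) := by
  rw [Ψof, T1_quadratic μ hc hσ hcl, log_exp]
  field_simp

lemma T2_gaussianReal_quadratic (hc : 0 < c) (hσ : σ ≠ 0) (hlam : 0 < lam) {v : ℝ≥0}
    (hv : (v : ℝ) = lam * σ ^ 2 * (c + lam)) (y : ℝ) :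
    T2 c σ (gaussianReal μ v)
        (fun w => (c * σ ^ 2) / 2 * log (c / (c + lam)) + (μ - w) ^ 2 / (2 * (c + lam))) y =
      exp ((lam * y ^ 2 / 2 + μ * y) / (c * σ ^ 2)) := by
  have hσ2 : 0 < σ ^ 2 := by positivity
  have hv_pos : 0 < (v : ℝ) := by rw [hv]; positivity
  have hA : 0 < 1 / (2 * (c * σ ^ 2) * lam) := by positivity
  have hlog : log (π / (1 / (2 * (c * σ ^ 2) * lam)))
      = log (2 * π * v) + log (c / (c + lam)) := by
    rw [← log_mul (by positivity) (by positivity), hv]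
    congr 1
    field_simp
  have integrand : ∀ w : ℝ, gaussianPDFReal μ v w •
      exp ((y * w - ((c * σ ^ 2) / 2 * log (c / (c + lam)) + (μ - w) ^ 2 / (2 * (c + lam)))) /
        (c * σ ^ 2))
      = exp (-(1 / (2 * (c * σ ^ 2) * lam)) * w ^ 2 + (y + μ / lam) / (c * σ ^ 2) * w
          + (-(μ ^ 2 / (2 * (c * σ ^ 2) * lam)) - log (π / (1 / (2 * (c * σ ^ 2) * lam))) / 2)) :=
      fun w => by
    rw [smul_eq_mul, gaussianPDFReal, mul_assoc, ← exp_add, inv_sqrt_mul_exp (by positivity), hlog]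
    congr 1
    rw [hv]
    field_simp
    ring
  rw [T2, integral_gaussianReal_eq_integral_smul (by exact_mod_cast hv_pos.ne')]
  simp_rw [integrand]
  rw [integral_exp_quadratic hA]
  congr 1
  field_simp
  ring

lemma T0op_gaussianReal_quadratic (hc : 0 < c) (hσ : σ ≠ 0) (hlam : 0 < lam) {v : ℝ≥0}
    (hv : (v : ℝ) = lam * σ ^ 2 * (c + lam)) :
    T0op c σ (gaussianReal μ v) (fun y => lam * y ^ 2 / 2 + μ * y) =
      fun y => lam * y ^ 2 / 2 + μ * y := by
  funext y
  rw [T0op, funext (Ψof_quadratic μ hc hσ (by linarith)),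
    T2_gaussianReal_quadratic μ hc hσ hlam hv, log_exp]
  field_simp

end QuadraticPotential

/-- for Gaussian `Pr = N(μ, γ²)` and
`λ* = (−c + √(c² + 4γ²/σ²))/2` (the unique positive root of `σ²λ² + ĉλ − γ² = 0`),
the quadratic `φ*(y) = λ*y²/2 + μy` is a fixed point of `T₀`, with
`Ψ*(v) = (ĉ/2) log(c/(c+λ*)) + (μ−v)²/(2(c+λ*))`. -/
theorem stmt14 (c σ μ γ : ℝ) (hc : 0 < c) (hσ : 0 < σ) (hγ : 0 < γ)
    (Pr : Measure ℝ) (hPr : Pr = ProbabilityTheory.gaussianReal μ (Real.toNNReal (γ ^ 2)))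
    (lam : ℝ) (hlam : lam = (-c + Real.sqrt (c ^ 2 + 4 * γ ^ 2 / σ ^ 2)) / 2) :
    (0 < lam ∧ σ ^ 2 * lam ^ 2 + c * σ ^ 2 * lam - γ ^ 2 = 0 ∧
      (∀ l : ℝ, 0 < l → σ ^ 2 * l ^ 2 + c * σ ^ 2 * l - γ ^ 2 = 0 → l = lam)) ∧
    T0op c σ Pr (fun y => lam * y ^ 2 / 2 + μ * y) = (fun y => lam * y ^ 2 / 2 + μ * y) ∧
    (∀ v : ℝ, Ψof c σ (fun y => lam * y ^ 2 / 2 + μ * y) v =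
      (c * σ ^ 2) / 2 * Real.log (c / (c + lam)) + (μ - v) ^ 2 / (2 * (c + lam))) := by
  have hσ2 : 0 < σ ^ 2 := by positivity
  obtain ⟨hlam_pos, hlam_root, hlam_unique⟩ :=
    quadratic_pos_root (b := c) (d := γ ^ 2 / σ ^ 2) (r := lam) (by positivity)
      (by rw [hlam, mul_div_assoc])
  have eq_sq_mul_monic (l : ℝ) :
      σ ^ 2 * l ^ 2 + c * σ ^ 2 * l - γ ^ 2 = σ ^ 2 * (l ^ 2 + c * l - γ ^ 2 / σ ^ 2) := by
    field_simp
  have hvar : ((γ ^ 2).toNNReal : ℝ) = lam * σ ^ 2 * (c + lam) := by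
    rw [Real.coe_toNNReal _ (sq_nonneg γ)]
    linear_combination -(eq_sq_mul_monic lam) - σ ^ 2 * hlam_root
  refine ⟨⟨hlam_pos, ?_, fun l hl hl_root => hlam_unique l hl ?_⟩, ?_,
    Ψof_quadratic μ hc hσ.ne' (by linarith)⟩
  · rw [eq_sq_mul_monic, hlam_root, mul_zero]
  · exact (mul_eq_zero.1 ((eq_sq_mul_monic l).symm.trans hl_root)).resolve_left hσ2.ne'
  · rw [hPr]
    exact T0op_gaussianReal_quadratic μ hc hσ.ne' hlam_pos hvar

end
end
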